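/- arXiv:1804.08829 — 4 statements merged into one kernel-verified Lean document; each statement's English description precedes it below -/
import Mathlib

section
/- Let U : ℝ^l → ℝ be convex and Lipschitz on a neighborhood of the range of w, with Lipschitz constant L = ‖∇U‖_∞. Let w : K → ℝ^l satisfy U(w(x)) ≤ 0 on K, let w_h : K → ℝ^l have average w̄_h with U(w̄_h) < 0, and let U_max := sup_K U(w_h) > 0. Define θ = U(w̄_h)/(U(w̄_h) − U_max) and w̃_h = θ w_h + (1−θ) w̄_h. Then ‖w̃_h − w_h‖_∞ ≤ (L / |U(w̄_h)|) · ‖w_h − w‖_∞ · ‖w̄_h − w_h‖_∞. -/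
open MeasureTheory

/-- Accuracy of the IRP limiter: the limited function satisfies
`‖w̃_h - w_h‖_∞ ≤ (L/|U(w̄_h)|) ‖w_h - w‖_∞ ‖w̄_h - w_h‖_∞`, where `L` is a
Lipschitz constant of `U` on a set containing the relevant ranges. -/
theorem stmt_3 (l d : ℕ) (U : (Fin l → ℝ) → ℝ) (hU : ConvexOn ℝ Set.univ U)
    (L : ℝ) (hL : 0 ≤ L) (s : Set (Fin l → ℝ))
    (hs : LipschitzOnWith (Real.toNNReal L) U s)
    (K : Set (Fin d → ℝ)) (w wh : (Fin d → ℝ) → (Fin l → ℝ)) (wbar : Fin l → ℝ)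
    (hws : ∀ x ∈ K, w x ∈ s) (hwhs : ∀ x ∈ K, wh x ∈ s) (hbs : wbar ∈ s)
    (havg : wbar = (volume K).toReal⁻¹ • ∫ x in K, wh x)
    (hw0 : ∀ x ∈ K, U (w x) ≤ 0) (hbar : U wbar < 0)
    (Umax : ℝ) (hmax : IsLUB ((fun x => U (wh x)) '' K) Umax) (hpos : 0 < Umax)
    (hb1 : BddAbove ((fun x => ‖wh x - w x‖) '' K))
    (hb2 : BddAbove ((fun x => ‖wbar - wh x‖) '' K))
    (θ : ℝ) (hθ : θ = U wbar / (U wbar - Umax)) :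
    sSup ((fun x => ‖(θ • wh x + (1 - θ) • wbar) - wh x‖) '' K)
      ≤ L / |U wbar| * sSup ((fun x => ‖wh x - w x‖) '' K)
        * sSup ((fun x => ‖wbar - wh x‖) '' K) := by
  -- K is nonempty
  have hKne : K.Nonempty := by
    by_contra h
    rw [Set.not_nonempty_iff_eq_empty] at h
    subst h
    simp only [Set.image_empty] at hmax
    have := hmax.2 (by intro y hy; exact absurd hy (Set.notMem_empty y) : Umax - 1 ∈ upperBounds (∅ : Set ℝ))
    linarith
  obtain ⟨x₀, hx₀⟩ := hKne
  set S1 := sSup ((fun x => ‖wh x - w x‖) '' K) with hS1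
  set S2 := sSup ((fun x => ‖wbar - wh x‖) '' K) with hS2
  have hS1nn : 0 ≤ S1 :=
    le_trans (norm_nonneg _) (le_csSup hb1 ⟨x₀, hx₀, rfl⟩)
  have hS2nn : 0 ≤ S2 :=
    le_trans (norm_nonneg _) (le_csSup hb2 ⟨x₀, hx₀, rfl⟩)
  -- Umax ≤ L * S1
  have hUmax : Umax ≤ L * S1 := by
    apply (isLUB_le_iff hmax).2
    intro y hy
    obtain ⟨x, hx, rfl⟩ := hy
    have hd := hs.dist_le_mul _ (hwhs x hx) _ (hws x hx)
    rw [Real.coe_toNNReal _ hL, Real.dist_eq, dist_eq_norm] at hd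
    have h1 : U (wh x) - U (w x) ≤ L * ‖wh x - w x‖ := (abs_le.1 hd).2
    have h2 : ‖wh x - w x‖ ≤ S1 := le_csSup hb1 ⟨x, hx, rfl⟩
    have := hw0 x hx
    nlinarith
  have hden : U wbar - Umax < 0 := by linarith
  have hne1 : U wbar - Umax ≠ 0 := ne_of_lt hden
  have hne2 : Umax - U wbar ≠ 0 := by intro h; apply hne1; linarith
  have h1θ : 1 - θ = Umax / (Umax - U wbar) := by
    rw [hθ]
    field_simp
    ring
  have h1θnn : 0 ≤ 1 - θ := by
    rw [h1θ]; exact div_nonneg hpos.le (by linarith)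
  have habs : |U wbar| = -U wbar := abs_of_neg hbar
  -- 1 - θ ≤ L / |U wbar| * S1
  have hkey : 1 - θ ≤ L / |U wbar| * S1 := by
    rw [h1θ, habs]
    have h2 : Umax / (Umax - U wbar) ≤ Umax / (-U wbar) := by
      apply div_le_div_of_nonneg_left hpos.le (by linarith) (by linarith)
    have h3 : Umax / (-U wbar) ≤ (L * S1) / (-U wbar) :=
      (div_le_div_iff_of_pos_right (by linarith)).mpr hUmax
    rw [div_mul_eq_mul_div]
    linarith
  -- LHS ≤ (1-θ) * S2 ≤ RHS
  have hLHS : sSup ((fun x => ‖(θ • wh x + (1 - θ) • wbar) - wh x‖) '' K) ≤ (1 - θ) * S2 := by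
    apply csSup_le (Set.Nonempty.image _ ⟨x₀, hx₀⟩)
    intro y hy
    obtain ⟨x, hx, rfl⟩ := hy
    show ‖(θ • wh x + (1 - θ) • wbar) - wh x‖ ≤ (1 - θ) * S2
    have heq : (θ • wh x + (1 - θ) • wbar) - wh x = (1 - θ) • (wbar - wh x) := by
      funext i
      simp [Pi.smul_apply, smul_eq_mul, Pi.add_apply, Pi.sub_apply]
      ring
    rw [heq, norm_smul, Real.norm_eq_abs, abs_of_nonneg h1θnn]
    exact mul_le_mul_of_nonneg_left (le_csSup hb2 ⟨x, hx, rfl⟩) h1θnn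
  calc sSup ((fun x => ‖(θ • wh x + (1 - θ) • wbar) - wh x‖) '' K)
      ≤ (1 - θ) * S2 := hLHS
    _ ≤ L / |U wbar| * S1 * S2 := mul_le_mul_of_nonneg_right hkey hS2nn
end

section
/- For the compressible Euler equations, the function q(w) = (s₀ − s(w))·ρ, where s(w) = log(p(w)/ρ^γ) and p(w) = (γ−1)(E − m²/(2ρ)), is convex on the set {(ρ, m, E) : ρ > 0, p(w) > 0}, for any constant s₀ and γ > 1. -/
/-!
With the internal energy `e = E - m²/(2ρ)`,
`q = (s₀ - log(γ-1))·ρ + ρ log(ρ/e) + (γ-1)·ρ log ρ`.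
The kinetic energy `m²/(2ρ)` is half the perspective of `t ↦ t²`, so `e` is concave.
The map `(ρ, e) ↦ ρ log(ρ/e)` is the perspective of `t ↦ t log t`, hence jointly convex,
and it is decreasing in `e`; composed with the linear `ρ` and the concave `e` it stays convex.
The last term is convex since `γ > 1`.
-/

open Real Set

noncomputable def internalEnergy (w : ℝ × ℝ × ℝ) : ℝ := w.2.2 - w.2.1 ^ 2 / (2 * w.1)

theorem ConvexOn.perspective {s : Set ℝ} {f : ℝ → ℝ} (hf : ConvexOn ℝ s f) :
    ConvexOn ℝ {p : ℝ × ℝ | 0 < p.2 ∧ p.1 / p.2 ∈ s} (fun p => p.2 * f (p.1 / p.2)) := by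
  set S := {p : ℝ × ℝ | 0 < p.2 ∧ p.1 / p.2 ∈ s}
  have combo : ∀ p ∈ S, ∀ q ∈ S, ∀ ⦃a b : ℝ⦄, 0 ≤ a → 0 ≤ b → a + b = 1 →
      a • p + b • q ∈ S ∧
        (a • p + b • q).2 * f ((a • p + b • q).1 / (a • p + b • q).2) ≤
          a • (p.2 * f (p.1 / p.2)) + b • (q.2 * f (q.1 / q.2)) := by
    rintro ⟨x₁, y₁⟩ ⟨hy₁ : 0 < y₁, hs₁ : x₁ / y₁ ∈ s⟩ ⟨x₂, y₂⟩ ⟨hy₂ : 0 < y₂, hs₂ : x₂ / y₂ ∈ s⟩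
      a b ha hb hab
    have hY : 0 < a * y₁ + b * y₂ := by simpa using convex_Ioi (0 : ℝ) hy₁ hy₂ ha hb hab
    set α := a * y₁ / (a * y₁ + b * y₂)
    set β := b * y₂ / (a * y₁ + b * y₂)
    have hαβ : α + β = 1 := by simp only [α, β]; field_simp
    have hratio : (a * x₁ + b * x₂) / (a * y₁ + b * y₂) = α * (x₁ / y₁) + β * (x₂ / y₂) := by
      simp only [α, β]
      field_simp
    simp only [S, Prod.smul_mk, Prod.mk_add_mk, smul_eq_mul, mem_ofPred_eq]
    rw [hratio]
    refine ⟨⟨hY, hf.1 hs₁ hs₂ (by positivity) (by positivity) hαβ⟩, ?_⟩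
    calc (a * y₁ + b * y₂) * f (α * (x₁ / y₁) + β * (x₂ / y₂))
        ≤ (a * y₁ + b * y₂) * (α * f (x₁ / y₁) + β * f (x₂ / y₂)) :=
          mul_le_mul_of_nonneg_left
            (hf.2 hs₁ hs₂ (by positivity) (by positivity) hαβ) hY.le
      _ = a * (y₁ * f (x₁ / y₁)) + b * (y₂ * f (x₂ / y₂)) := by
          simp only [α, β]
          field_simp
  exact ⟨fun p hp q hq a b ha hb hab => (combo p hp q hq ha hb hab).1,
    fun p hp q hq a b ha hb hab => (combo p hp q hq ha hb hab).2⟩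

theorem convexOn_sq_div : ConvexOn ℝ {p : ℝ × ℝ | 0 < p.2} (fun p => p.1 ^ 2 / p.2) := by
  have h := (even_two.convexOn_pow (𝕜 := ℝ)).perspective
  simp only [mem_univ, and_true] at h
  exact h.congr fun p (hp : 0 < p.2) => by field_simp

theorem convexOn_mul_log_div :
    ConvexOn ℝ (Ioi 0 ×ˢ Ioi 0) (fun p : ℝ × ℝ => p.1 * log (p.1 / p.2)) := by
  refine (convexOn_mul_log.perspective.subset ?_ ((convex_Ioi 0).prod (convex_Ioi 0))).congr ?_
  · rintro p ⟨hp₁ : 0 < p.1, hp₂ : 0 < p.2⟩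
    exact ⟨hp₂, (div_pos hp₁ hp₂).le⟩
  · rintro p ⟨-, hp₂ : 0 < p.2⟩
    simp only
    field_simp

theorem concaveOn_internalEnergy : ConcaveOn ℝ {w : ℝ × ℝ × ℝ | 0 < w.1} internalEnergy := by
  let energy : ℝ × ℝ × ℝ →ₗ[ℝ] ℝ := LinearMap.snd ℝ ℝ ℝ ∘ₗ LinearMap.snd ℝ ℝ (ℝ × ℝ)
  let momentumMass : ℝ × ℝ × ℝ →ₗ[ℝ] ℝ × ℝ :=
    (LinearMap.fst ℝ ℝ ℝ ∘ₗ LinearMap.snd ℝ ℝ (ℝ × ℝ)).prod (LinearMap.fst ℝ ℝ (ℝ × ℝ))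
  have hkin : ConvexOn ℝ {w : ℝ × ℝ × ℝ | 0 < w.1} fun w => (1 / 2 : ℝ) • (w.2.1 ^ 2 / w.1) :=
    (convexOn_sq_div.comp_linearMap momentumMass).smul (by norm_num)
  refine ((energy.concaveOn hkin.1).sub hkin).congr fun w (hw : 0 < w.1) => ?_
  simp only [internalEnergy, Pi.sub_apply, smul_eq_mul, energy, LinearMap.comp_apply,
    LinearMap.snd_apply]
  field_simp

theorem ConcaveOn.convexOn_mul_log_div {E : Type*} [AddCommGroup E] [Module ℝ E] {s : Set E}
    {g : E → ℝ} (hg : ConcaveOn ℝ s g) (f : E →ₗ[ℝ] ℝ) (hf : ∀ x ∈ s, 0 < f x)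
    (hg₀ : ∀ x ∈ s, 0 < g x) : ConvexOn ℝ s (fun x => f x * log (f x / g x)) := by
  refine ⟨hg.1, fun x hx y hy a b ha hb hab => ?_⟩
  have hz := hg.1 hx hy ha hb hab
  have hcomb : 0 < a * g x + b * g y := by
    simpa using convex_Ioi (0 : ℝ) (hg₀ x hx) (hg₀ y hy) ha hb hab
  have hgz : a * g x + b * g y ≤ g (a • x + b • y) := by simpa using hg.2 hx hy ha hb hab
  have hmono : f (a • x + b • y) * log (f (a • x + b • y) / g (a • x + b • y)) ≤
      f (a • x + b • y) * log (f (a • x + b • y) / (a * g x + b * g y)) :=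
    mul_le_mul_of_nonneg_left (log_le_log (div_pos (hf _ hz) (hg₀ _ hz))
      (div_le_div_of_nonneg_left (hf _ hz).le hcomb hgz)) (hf _ hz).le
  have hlogsum := _root_.convexOn_mul_log_div.2 (x := (f x, g x)) (y := (f y, g y))
    ⟨hf x hx, hg₀ x hx⟩ ⟨hf y hy, hg₀ y hy⟩ ha hb hab
  simp only [Prod.smul_mk, Prod.mk_add_mk, smul_eq_mul] at hlogsum
  simp only [map_add, map_smul, smul_eq_mul] at hmono ⊢
  exact hmono.trans hlogsum

/-- The function `q(w) = (s₀ - s(w))·ρ`, with `s = log(p/ρ^γ)` and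
`p = (γ-1)(E - m²/(2ρ))`, is convex on `{ρ > 0, p > 0}`. -/
theorem stmt_7 (γ s₀ : ℝ) (hγ : 1 < γ) :
    ConvexOn ℝ
      {w : ℝ × ℝ × ℝ | 0 < w.1 ∧ 0 < (γ - 1) * (w.2.2 - w.2.1 ^ 2 / (2 * w.1))}
      (fun w => (s₀ - Real.log
        ((γ - 1) * (w.2.2 - w.2.1 ^ 2 / (2 * w.1)) / w.1 ^ γ)) * w.1) := by
  have hγ₁ : 0 < γ - 1 := by linarith
  let ρ : ℝ × ℝ × ℝ →ₗ[ℝ] ℝ := LinearMap.fst ℝ ℝ (ℝ × ℝ)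
  set D := {w : ℝ × ℝ × ℝ | 0 < w.1 ∧ 0 < internalEnergy w}
  have hD : {w : ℝ × ℝ × ℝ | 0 < w.1 ∧ 0 < (γ - 1) * (w.2.2 - w.2.1 ^ 2 / (2 * w.1))} = D := by
    simp only [D, internalEnergy, mul_pos_iff_of_pos_left hγ₁]
  rw [hD]
  have hconc : ConcaveOn ℝ D internalEnergy :=
    concaveOn_internalEnergy.subset (fun w hw => hw.1) (concaveOn_internalEnergy.convex_gt 0)
  have hrel : ConvexOn ℝ D fun w => ρ w * log (ρ w / internalEnergy w) :=
    hconc.convexOn_mul_log_div ρ (fun w hw => hw.1) (fun w hw => hw.2)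
  have hmul_log : ConvexOn ℝ D fun w => ρ w * log (ρ w) :=
    (convexOn_mul_log.comp_linearMap ρ).subset (fun w hw => le_of_lt hw.1) hconc.1
  refine ((((s₀ - log (γ - 1)) • ρ).convexOn hconc.1).add hrel |>.add
    (hmul_log.smul hγ₁.le)).congr fun w ⟨hρ, he⟩ => ?_
  simp only [ρ, Pi.add_apply, LinearMap.smul_apply, LinearMap.fst_apply, smul_eq_mul]
  unfold internalEnergy at he ⊢
  rw [log_div hρ.ne' he.ne', log_div (by positivity) (by positivity), log_mul hγ₁.ne' he.ne',
    log_rpow hρ]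
  ring
end

section
/- Let γ > 1 and s₀ ∈ ℝ. The set Σ = {(ρ, m, E) ∈ ℝ³ : ρ > 0, p > 0, q ≤ 0}, where p = (γ−1)(E − m²/(2ρ)) and q = (s₀ − log(p/ρ^γ))·ρ, is a convex subset of ℝ³. -/
/-!
For `ρ > 0` the two conditions `p > 0` and `q ≤ 0` together say exactly that
`exp s₀ · ρ^γ ≤ p`. The left side is convex in `ρ` (as `γ ≥ 1`) and the pressure
`p = (γ - 1)(E - m²/(2ρ))` is concave, since the kinetic energy `m²/(2ρ)` is the perspective
of a convex quadratic. So `Σ` is a sublevel set of a convex function on the half-space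
`ρ > 0`.
-/

open Real Set

section KineticEnergy

variable {𝕜 : Type*} [Field 𝕜] [LinearOrder 𝕜] [IsStrictOrderedRing 𝕜]

theorem convex_setOf_fst_pos {F : Type*} [AddCommMonoid F] [Module 𝕜 F] :
    Convex 𝕜 {x : 𝕜 × F | 0 < x.1} :=
  convex_halfSpace_gt (LinearMap.fst 𝕜 𝕜 F).isLinear 0

theorem add_sq_div_add_le (a b : 𝕜) {x y : 𝕜} (hx : 0 < x) (hy : 0 < y) :
    (a + b) ^ 2 / (x + y) ≤ a ^ 2 / x + b ^ 2 / y := by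
  simpa [Fin.sum_univ_two] using
    Finset.sq_sum_div_le_sum_sq_div Finset.univ ![a, b] (g := ![x, y])
      (by simp [Fin.forall_fin_two, hx, hy])

theorem convexOn_sq_div_two_mul :
    ConvexOn 𝕜 {x : 𝕜 × 𝕜 | 0 < x.1} fun x => x.2 ^ 2 / (2 * x.1) := by
  refine convexOn_iff_forall_pos.2 ⟨convex_setOf_fst_pos, ?_⟩
  rintro ⟨ρ₁, m₁⟩ (h₁ : 0 < ρ₁) ⟨ρ₂, m₂⟩ (h₂ : 0 < ρ₂) a b ha hb -
  convert add_sq_div_add_le (a * m₁) (b * m₂)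
    (mul_pos (mul_pos two_pos ha) h₁) (mul_pos (mul_pos two_pos hb) h₂) using 1
  · simp only [Prod.smul_mk, Prod.mk_add_mk, smul_eq_mul]
    ring_nf
  · simp only [smul_eq_mul]
    field_simp

end KineticEnergy

theorem concaveOn_pressure {γ : ℝ} (hγ : 1 ≤ γ) :
    ConcaveOn ℝ {w : ℝ × ℝ × ℝ | 0 < w.1}
      fun w => (γ - 1) * (w.2.2 - w.2.1 ^ 2 / (2 * w.1)) := by
  have hkin : ConvexOn ℝ {w : ℝ × ℝ × ℝ | 0 < w.1} fun w => w.2.1 ^ 2 / (2 * w.1) :=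
    (convexOn_sq_div_two_mul (𝕜 := ℝ)).comp_linearMap
      ((LinearMap.fst ℝ ℝ (ℝ × ℝ)).prod (LinearMap.fst ℝ ℝ ℝ ∘ₗ LinearMap.snd ℝ ℝ (ℝ × ℝ)))
  have hE : ConcaveOn ℝ {w : ℝ × ℝ × ℝ | 0 < w.1} fun w => w.2.2 :=
    (LinearMap.snd ℝ ℝ ℝ ∘ₗ LinearMap.snd ℝ ℝ (ℝ × ℝ)).concaveOn convex_setOf_fst_pos
  exact (hE.sub hkin).smul (sub_nonneg.2 hγ)

theorem convexOn_mul_rpow_fst {F : Type*} [AddCommGroup F] [Module ℝ F] {γ c : ℝ}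
    (hc : 0 ≤ c) (hγ : 1 ≤ γ) :
    ConvexOn ℝ {w : ℝ × F | 0 < w.1} fun w => c * w.1 ^ γ := by
  have h : ConvexOn ℝ {w : ℝ × F | 0 ≤ w.1} fun w => w.1 ^ γ :=
    (convexOn_rpow hγ).comp_linearMap (LinearMap.fst ℝ ℝ F)
  exact (h.subset (ofPred_subset_ofPred.2 fun _ => le_of_lt) convex_setOf_fst_pos).smul hc

theorem pos_and_sub_log_div_rpow_mul_nonpos_iff {ρ p : ℝ} (s₀ γ : ℝ) (hρ : 0 < ρ) :
    0 < p ∧ (s₀ - log (p / ρ ^ γ)) * ρ ≤ 0 ↔ exp s₀ * ρ ^ γ ≤ p := by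
  have hργ : 0 < ρ ^ γ := rpow_pos_of_pos hρ γ
  constructor
  · rintro ⟨hp, h⟩
    rw [← le_div_iff₀ hργ, ← le_log_iff_exp_le (div_pos hp hργ)]
    nlinarith
  · intro h
    have hp : 0 < p := (by positivity : 0 < exp s₀ * ρ ^ γ).trans_le h
    rw [← le_div_iff₀ hργ, ← le_log_iff_exp_le (div_pos hp hργ)] at h
    exact ⟨hp, mul_nonpos_of_nonpos_of_nonneg (by linarith) hρ.le⟩

/-- The invariant region `Σ = {ρ > 0, p > 0, q ≤ 0}` of the 1D compressible
Euler equations is convex. -/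
theorem stmt_8 (γ s₀ : ℝ) (hγ : 1 < γ) :
    Convex ℝ {w : ℝ × ℝ × ℝ |
      0 < w.1 ∧
      0 < (γ - 1) * (w.2.2 - w.2.1 ^ 2 / (2 * w.1)) ∧
      (s₀ - Real.log
        ((γ - 1) * (w.2.2 - w.2.1 ^ 2 / (2 * w.1)) / w.1 ^ γ)) * w.1 ≤ 0} := by
  have h := ((convexOn_mul_rpow_fst (exp_pos s₀).le hγ.le).sub
    (concaveOn_pressure hγ.le)).convex_le 0
  convert h using 1
  ext w
  simp only [mem_ofPred_eq, Pi.sub_apply, sub_nonpos]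
  exact and_congr_right fun hρ => pos_and_sub_log_div_rpow_mul_nonpos_iff s₀ γ hρ
end

section
/- For the invariant region Σ = {(ρ,m,n,E) : ρ > 0, p > 0, q ≤ 0} of the 2D Euler equations, the gradient of q with respect to the primitive variables U = (ρ, u^N, u^T, p) on the boundary surface {q = 0} is parallel to the left eigenvector l² = (1, 0, 0, −1/c²) of the projected system's matrix A(U); specifically ∇_U (s₀ − s) ρ restricted to {q=0} equals γ·l² up to the stated normalization, where s = log(p/ρ^γ) and c² = γp/ρ. -/
open Matrix

/-! On `{s = s₀}` the factor `s₀ - s` of `q = (s₀ - s)ρ` vanishes, so the product rule leaves only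
`dq = -ρ ds`. With `ds = dp/p - γ dρ/ρ` this is `γ dρ - (ρ/p) dp = γ (dρ - dp/c²)`, i.e. `γ l²`. -/

theorem HasFDerivAt.const_sub_mul_of_eq {E : Type*} [NormedAddCommGroup E] [NormedSpace ℝ E]
    {f g : E → ℝ} {f' g' : E →L[ℝ] ℝ} {x : E} {c : ℝ}
    (hf : HasFDerivAt f f' x) (hg : HasFDerivAt g g' x) (hfx : f x = c) :
    HasFDerivAt (fun v => (c - f v) * g v) (-(g x • f')) x := by
  have h := (hf.const_sub c).mul hg
  rwa [hfx, sub_self, zero_smul, zero_add, smul_neg] at h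

theorem Real.log_div_rpow {a b : ℝ} (ha : 0 < a) (hb : 0 < b) (γ : ℝ) :
    Real.log (a / b ^ γ) = Real.log a - γ * Real.log b := by
  rw [Real.log_div ha.ne' (Real.rpow_pos_of_pos hb γ).ne', Real.log_rpow hb]

theorem hasFDerivAt_log_div_rpow {ι : Type*} [Fintype ι] (i j : ι) (γ : ℝ) {x : ι → ℝ}
    (hi : 0 < x i) (hj : 0 < x j) :
    HasFDerivAt (fun v : ι → ℝ => Real.log (v j / v i ^ γ))
      ((x j)⁻¹ • ContinuousLinearMap.proj (R := ℝ) (φ := fun _ => ℝ) j -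
        γ • (x i)⁻¹ • ContinuousLinearMap.proj i) x := by
  have hlog (k : ι) (hk : 0 < x k) : HasFDerivAt (fun v : ι → ℝ => Real.log (v k))
      ((x k)⁻¹ • ContinuousLinearMap.proj (R := ℝ) (φ := fun _ => ℝ) k) x := by
    simpa using (ContinuousLinearMap.proj (R := ℝ) (φ := fun _ : ι => ℝ) k).hasFDerivAt.log hk.ne'
  have hpos : ∀ᶠ v in nhds x, 0 < v i ∧ 0 < v j :=
    (continuousAt_const.eventually_lt (continuous_apply i).continuousAt hi).and
      (continuousAt_const.eventually_lt (continuous_apply j).continuousAt hj)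
  refine ((hlog j hj).sub ((hlog i hi).const_mul γ)).congr_of_eventuallyEq ?_
  filter_upwards [hpos] with v hv
  exact Real.log_div_rpow hv.2 hv.1 γ

/-- On the boundary `{q = 0}` of the invariant region, the gradient of
`q(U) = (s₀ - s)ρ` in the primitive variables `U = (ρ, u^N, u^T, p)` equals
`γ·l²` where `l² = (1, 0, 0, -1/c²)` is the left eigenvector of `A(U)` for the
eigenvalue `u^N` and `c² = γp/ρ`. -/
theorem stmt_16 (γ s₀ ρ uN uT p : ℝ) (hγ : 1 < γ) (hρ : 0 < ρ) (hp : 0 < p)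
    (hs : Real.log (p / ρ ^ γ) = s₀)
    (c2 : ℝ) (hc2 : c2 = γ * p / ρ)
    (Q : (Fin 4 → ℝ) → ℝ)
    (hQ : Q = fun v => (s₀ - Real.log (v 3 / (v 0) ^ γ)) * v 0)
    (L : (Fin 4 → ℝ) →L[ℝ] ℝ)
    (hL : HasFDerivAt Q L ![ρ, uN, uT, p]) :
    ∀ ξ : Fin 4 → ℝ, L ξ = γ * (![1, 0, 0, -1/c2] ⬝ᵥ ξ) := by
  intro ξ
  subst hQ hc2
  have hq := (hasFDerivAt_log_div_rpow (x := ![ρ, uN, uT, p]) 0 3 γ hρ hp).const_sub_mul_of_eq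
    (ContinuousLinearMap.proj 0).hasFDerivAt hs
  have hγ0 : γ ≠ 0 := (zero_lt_one.trans hγ).ne'
  rw [hL.unique hq]
  simp only [dotProduct, Fin.sum_univ_four, Fin.isValue, cons_val, cons_val_zero, cons_val_one,
    ContinuousLinearMap.proj_apply, _root_.neg_apply, _root_.smul_apply, _root_.sub_apply,
    smul_eq_mul]
  field_simp
  ring
end
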